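/- arXiv:1408.5732 — 2 statements merged into one kernel-verified Lean document; each statement's English description precedes it below -/
import Mathlib

section
/- Suppose H : ℝ → ℝ is strictly increasing and differentiable at x0 with H'(x0) = ω0 > 0. Let R1 > 1. For every ε > 0 there exists δ > 0 such that for all z1 < z2 < z3 < z4 in (x0−δ, x0+δ) satisfying: (a) the three intervals [z1,z2], [z2,z3], [z3,z4] have pairwise R1-comparable lengths, and (b) max_i |z_i − x0| ≤ R1·(z2 − z1), one has |Dist(z1,z2,z3,z4;H) − 1| ≤ C·ε, where C > 0 depends only on R1 and ω0. -/
/-!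
Write `s = z2 - z1`. By differentiability, the error of the linear approximation of `H` at
each `zi` is small compared with `|zi - x0| ≤ R1 s`, while each of the pairs `(z1, z2)`,
`(z3, z4)`, `(z1, z3)`, `(z2, z4)` is at least `s / R1` apart. Hence the four difference
quotients of `H` over these pairs are within a small relative error `t` of `ω0`, and the
distortion, which is `s12 s34 / (s13 s24)` in terms of them, is within `16 t` of `1`.
-/

noncomputable def Cr (z1 z2 z3 z4 : ℝ) : ℝ :=
  ((z2 - z1) * (z4 - z3)) / ((z3 - z1) * (z4 - z2))

noncomputable def Distortion (z1 z2 z3 z4 : ℝ) (F : ℝ → ℝ) : ℝ :=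
  Cr (F z1) (F z2) (F z3) (F z4) / Cr z1 z2 z3 z4

open Metric

theorem distortion_eq_slope (z1 z2 z3 z4 : ℝ) (F : ℝ → ℝ) :
    Distortion z1 z2 z3 z4 F =
      slope F z1 z2 * slope F z3 z4 / (slope F z1 z3 * slope F z2 z4) := by
  simp only [Distortion, Cr, slope_def_field, div_eq_mul_inv, mul_inv]
  ring

theorem abs_mul_div_mul_sub_one_le {ω t a b c d : ℝ} (hω : 0 < ω) (ht : t ≤ 1 / 2)
    (ha : |a - ω| ≤ t * ω) (hb : |b - ω| ≤ t * ω)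
    (hc : |c - ω| ≤ t * ω) (hd : |d - ω| ≤ t * ω) :
    |a * b / (c * d) - 1| ≤ 16 * t := by
  have ht0 : 0 ≤ t := nonneg_of_mul_nonneg_left ((abs_nonneg _).trans ha) hω
  obtain ⟨ha₁, ha₂⟩ := abs_le.mp ha
  obtain ⟨hb₁, hb₂⟩ := abs_le.mp hb
  obtain ⟨hc₁, hc₂⟩ := abs_le.mp hc
  obtain ⟨hd₁, hd₂⟩ := abs_le.mp hd
  have hl : ω / 2 ≤ (1 - t) * ω := by nlinarith
  have hab : a * b ≤ ((1 + t) * ω) ^ 2 := by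
    rw [sq]; exact mul_le_mul (by linarith) (by linarith) (by linarith) (by positivity)
  have hab' : ((1 - t) * ω) ^ 2 ≤ a * b := by
    rw [sq]; exact mul_le_mul (by linarith) (by linarith) (by linarith) (by linarith)
  have hcd : ((1 - t) * ω) ^ 2 ≤ c * d := by
    rw [sq]; exact mul_le_mul (by linarith) (by linarith) (by linarith) (by linarith)
  have hcd' : c * d ≤ ((1 + t) * ω) ^ 2 := by
    rw [sq]; exact mul_le_mul (by linarith) (by linarith) (by linarith) (by positivity)
  have hcd₀ : ω ^ 2 / 4 ≤ c * d := le_trans (by nlinarith) hcd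
  have hcd_pos : 0 < c * d := lt_of_lt_of_le (by positivity) hcd₀
  have hnum : |a * b - c * d| ≤ 4 * t * ω ^ 2 := abs_le.mpr ⟨by nlinarith, by nlinarith⟩
  rw [div_sub_one hcd_pos.ne', abs_div, abs_of_pos hcd_pos, div_le_iff₀ hcd_pos]
  nlinarith [mul_le_mul_of_nonneg_left hcd₀ ht0]

theorem HasDerivAt.abs_slope_sub_mul_le {f : ℝ → ℝ} {f' x : ℝ} (hf : HasDerivAt f f' x)
    {η : ℝ} (hη : 0 < η) :
    ∃ δ > 0, ∀ z ∈ ball x δ, ∀ w ∈ ball x δ,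
      |slope f z w - f'| * |w - z| ≤ η * (|z - x| + |w - x|) := by
  obtain ⟨δ, hδ, hlin⟩ := Metric.eventually_nhds_iff.mp (hf.isLittleO.def hη)
  refine ⟨δ, hδ, fun z hz w hw => ?_⟩
  have hz' := hlin hz
  have hw' := hlin hw
  simp only [Real.norm_eq_abs, smul_eq_mul] at hz' hw'
  calc |slope f z w - f'| * |w - z|
      = |(f w - f x - (w - x) * f') - (f z - f x - (z - x) * f')| := by
        rw [← abs_mul, sub_mul, mul_comm, ← smul_eq_mul, sub_smul_slope, vsub_eq_sub]
        ring_nf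
    _ ≤ η * (|z - x| + |w - x|) := by
        linarith [abs_sub (f w - f x - (w - x) * f') (f z - f x - (z - x) * f')]

theorem distortion_near_diff_point_general (H : ℝ → ℝ)
    (x0 ω0 : ℝ) (hd : HasDerivAt H ω0 x0) (hω : 0 < ω0)
    (R1 : ℝ) (hR1 : 1 < R1) :
    ∃ C > 0, ∀ ε > 0, ∃ δ > 0, ∀ z1 z2 z3 z4 : ℝ,
      z1 < z2 → z2 < z3 → z3 < z4 →
      z1 ∈ Set.Ioo (x0 - δ) (x0 + δ) → z2 ∈ Set.Ioo (x0 - δ) (x0 + δ) →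
      z3 ∈ Set.Ioo (x0 - δ) (x0 + δ) → z4 ∈ Set.Ioo (x0 - δ) (x0 + δ) →
      (z2 - z1 ≤ R1 * (z3 - z2) ∧ z3 - z2 ≤ R1 * (z2 - z1)) →
      (z2 - z1 ≤ R1 * (z4 - z3) ∧ z4 - z3 ≤ R1 * (z2 - z1)) →
      (z3 - z2 ≤ R1 * (z4 - z3) ∧ z4 - z3 ≤ R1 * (z3 - z2)) →
      (|z1 - x0| ≤ R1 * (z2 - z1) ∧ |z2 - x0| ≤ R1 * (z2 - z1) ∧
        |z3 - x0| ≤ R1 * (z2 - z1) ∧ |z4 - x0| ≤ R1 * (z2 - z1)) →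
      |Distortion z1 z2 z3 z4 H - 1| ≤ C * ε := by
  refine ⟨16, by norm_num, fun ε hε => ?_⟩
  set t := min ε (1 / 2)
  have ht : 0 < t := by positivity
  obtain ⟨δ, hδ, hslope⟩ := hd.abs_slope_sub_mul_le (η := t * ω0 / (2 * R1 ^ 2)) (by positivity)
  refine ⟨δ, hδ, fun z1 z2 z3 z4 h12 h23 h34 hz1 hz2 hz3 hz4 _ h1234 _ ⟨hx1, hx2, hx3, hx4⟩ => ?_⟩
  rw [← Real.ball_eq_Ioo] at hz1 hz2 hz3 hz4
  set s := z2 - z1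
  have hs : 0 < s := sub_pos.mpr h12
  have pair : ∀ z ∈ ball x0 δ, ∀ w ∈ ball x0 δ, |z - x0| ≤ R1 * s → |w - x0| ≤ R1 * s →
      s ≤ R1 * (w - z) → |slope H z w - ω0| ≤ t * ω0 := by
    intro z hz w hw hzx hwx hsep
    have hwz : 0 < w - z := pos_of_mul_pos_right (hs.trans_le hsep) (by linarith)
    refine le_of_mul_le_mul_right ?_ hwz
    calc |slope H z w - ω0| * (w - z) = |slope H z w - ω0| * |w - z| := by rw [abs_of_pos hwz]
      _ ≤ t * ω0 / (2 * R1 ^ 2) * (2 * R1 * s) := (hslope z hz w hw).trans (by gcongr; linarith)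
      _ ≤ t * ω0 / (2 * R1 ^ 2) * (2 * R1 * (R1 * (w - z))) := by gcongr
      _ = t * ω0 * (w - z) := by field_simp
  rw [distortion_eq_slope]
  calc _ ≤ 16 * t := abs_mul_div_mul_sub_one_le hω (min_le_right _ _)
        (pair z1 hz1 z2 hz2 hx1 hx2 (by nlinarith))
        (pair z3 hz3 z4 hz4 hx3 hx4 h1234.1)
        (pair z1 hz1 z3 hz3 hx1 hx3 (by nlinarith))
        (pair z2 hz2 z4 hz4 hx2 hx4 (by nlinarith))
    _ ≤ 16 * ε := by gcongr; exact min_le_left _ _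

/-- Lemma 5.1: near a point of positive differentiability of `H`, the cross-ratio
distortion under `H` of comparable quadruples is close to `1`. -/
theorem distortion_near_diff_point (H : ℝ → ℝ) (hH : StrictMono H)
    (x0 ω0 : ℝ) (hd : HasDerivAt H ω0 x0) (hω : 0 < ω0)
    (R1 : ℝ) (hR1 : 1 < R1) :
    ∃ C > 0, ∀ ε > 0, ∃ δ > 0, ∀ z1 z2 z3 z4 : ℝ,
      z1 < z2 → z2 < z3 → z3 < z4 →
      z1 ∈ Set.Ioo (x0 - δ) (x0 + δ) → z2 ∈ Set.Ioo (x0 - δ) (x0 + δ) →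
      z3 ∈ Set.Ioo (x0 - δ) (x0 + δ) → z4 ∈ Set.Ioo (x0 - δ) (x0 + δ) →
      (z2 - z1 ≤ R1 * (z3 - z2) ∧ z3 - z2 ≤ R1 * (z2 - z1)) →
      (z2 - z1 ≤ R1 * (z4 - z3) ∧ z4 - z3 ≤ R1 * (z2 - z1)) →
      (z3 - z2 ≤ R1 * (z4 - z3) ∧ z4 - z3 ≤ R1 * (z3 - z2)) →
      (|z1 - x0| ≤ R1 * (z2 - z1) ∧ |z2 - x0| ≤ R1 * (z2 - z1) ∧
        |z3 - x0| ≤ R1 * (z2 - z1) ∧ |z4 - x0| ≤ R1 * (z2 - z1)) →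
      |Distortion z1 z2 z3 z4 H - 1| ≤ C * ε :=
  distortion_near_diff_point_general H x0 ω0 hd hω R1 hR1
end

section
/- Let F : [z1, z4] → ℝ be C² with F' ≥ c > 0 on [z1,z4], where z1 < z2 < z3 < z4. Then |Dist(z1,z2,z3,z4;F) − 1| ≤ C1·(z4 − z1), where C1 depends only on bounds for F', F'' and c. -/
/-!
By the mean value theorem each of the four differences in the cross-ratio of `F` is the
corresponding difference of the `zᵢ` times a value of `F'` at a point of `(z₁, z₄)`, so the
distortion is a ratio `F'(p) F'(q) / (F'(r) F'(s))`. The numerator and denominator differ by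
`F'(p) (F'(q) - F'(s)) + F'(s) (F'(p) - F'(r))`, which is `O(z₄ - z₁)` because `F'` is bounded
and Lipschitz (it is `C¹` on a compact interval), while the denominator is at least `c²`.
-/

open Set NNReal

theorem ContDiffOn.exists_bound_lipschitzOnWith_deriv {F : ℝ → ℝ} {a b : ℝ}
    (hF : ContDiffOn ℝ 2 F (Icc a b)) :
    ∃ M K : ℝ≥0, (∀ x ∈ Ioo a b, |deriv F x| ≤ M) ∧ LipschitzOnWith K (deriv F) (Ioo a b) := by
  rcases lt_or_ge a b with hab | hba
  swap
  · exact ⟨0, 0, by simp [Ioo_eq_empty_of_le hba]⟩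
  have hg : ContDiffOn ℝ 1 (derivWithin F (Icc a b)) (Icc a b) :=
    hF.derivWithin (uniqueDiffOn_Icc hab) (by norm_num)
  have hinterior : EqOn (derivWithin F (Icc a b)) (deriv F) (Ioo a b) := fun x hx =>
    derivWithin_of_mem_nhds (Icc_mem_nhds hx.1 hx.2)
  obtain ⟨M, hM⟩ := isCompact_Icc.exists_bound_of_continuousOn hg.continuousOn
  obtain ⟨K, hK⟩ := hg.exists_lipschitzOnWith one_ne_zero (convex_Icc a b) isCompact_Icc
  refine ⟨M.toNNReal, K, fun x hx => ?_, fun x hx y hy => ?_⟩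
  · rw [← hinterior hx, ← Real.norm_eq_abs]
    exact (hM x (Ioo_subset_Icc_self hx)).trans (Real.le_coe_toNNReal M)
  · rw [← hinterior hx, ← hinterior hy]
    exact hK (Ioo_subset_Icc_self hx) (Ioo_subset_Icc_self hy)

theorem distortion_eq_slope_mul_div {z1 z2 z3 z4 : ℝ} (F : ℝ → ℝ) (h12 : z1 ≠ z2)
    (h34 : z3 ≠ z4) (h13 : z1 ≠ z3) (h24 : z2 ≠ z4) :
    Distortion z1 z2 z3 z4 F =
      slope F z1 z2 * slope F z3 z4 / (slope F z1 z3 * slope F z2 z4) := by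
  simp only [Distortion, Cr, slope_def_field]
  field_simp [sub_ne_zero.2 h12.symm, sub_ne_zero.2 h34.symm, sub_ne_zero.2 h13.symm,
    sub_ne_zero.2 h24.symm]

theorem exists_distortion_eq_deriv_mul_div {F : ℝ → ℝ} {z1 z2 z3 z4 : ℝ} (h12 : z1 < z2)
    (h23 : z2 < z3) (h34 : z3 < z4) (hcont : ContinuousOn F (Icc z1 z4))
    (hdiff : DifferentiableOn ℝ F (Ioo z1 z4)) :
    ∃ p ∈ Ioo z1 z4, ∃ q ∈ Ioo z1 z4, ∃ r ∈ Ioo z1 z4, ∃ s ∈ Ioo z1 z4,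
      Distortion z1 z2 z3 z4 F = deriv F p * deriv F q / (deriv F r * deriv F s) := by
  have mvt : ∀ u v, z1 ≤ u → u < v → v ≤ z4 → ∃ ξ ∈ Ioo z1 z4, deriv F ξ = slope F u v :=
    fun u v hu huv hv =>
      have hsub : Ioo u v ⊆ Ioo z1 z4 := Ioo_subset_Ioo hu hv
      let ⟨ξ, hξ, h⟩ := exists_deriv_eq_slope' F huv (hcont.mono (Icc_subset_Icc hu hv))
        (hdiff.mono hsub)
      ⟨ξ, hsub hξ, h⟩
  obtain ⟨p, hp, hp'⟩ := mvt z1 z2 le_rfl h12 (by linarith)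
  obtain ⟨q, hq, hq'⟩ := mvt z3 z4 (by linarith) h34 le_rfl
  obtain ⟨r, hr, hr'⟩ := mvt z1 z3 le_rfl (by linarith) (by linarith)
  obtain ⟨s, hs, hs'⟩ := mvt z2 z4 (by linarith) (by linarith) le_rfl
  refine ⟨p, hp, q, hq, r, hr, s, hs, ?_⟩
  rw [hp', hq', hr', hs']
  exact distortion_eq_slope_mul_div F h12.ne h34.ne (by linarith) (by linarith)

theorem abs_mul_div_mul_sub_one_le_s11 {p q r s c M δ : ℝ} (hc : 0 < c) (hr : c ≤ r) (hs : c ≤ s)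
    (hp : |p| ≤ M) (hsM : |s| ≤ M) (hpr : |p - r| ≤ δ) (hqs : |q - s| ≤ δ) :
    |p * q / (r * s) - 1| ≤ 2 * M * δ / c ^ 2 := by
  have hrs : c ^ 2 ≤ r * s := sq c ▸ mul_le_mul hr hs hc.le (hc.le.trans hr)
  have hrs_pos : 0 < r * s := (pow_pos hc 2).trans_le hrs
  have hnum : |p * q - r * s| ≤ 2 * M * δ :=
    calc |p * q - r * s| = |p * (q - s) + s * (p - r)| := by congr 1; ring
      _ ≤ |p| * |q - s| + |s| * |p - r| := by
        rw [← abs_mul, ← abs_mul]; exact abs_add_le _ _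
      _ ≤ M * δ + M * δ := by gcongr <;> linarith [abs_nonneg (p - r), abs_nonneg p]
      _ = 2 * M * δ := by ring
  rw [div_sub_one hrs_pos.ne', abs_div, abs_of_pos hrs_pos]
  exact div_le_div₀ ((abs_nonneg _).trans hnum) hnum (by positivity) hrs

theorem distortion_C2_estimate_general (a b : ℝ) (F : ℝ → ℝ) (c : ℝ)
    (hc : 0 < c) (hF : ContDiffOn ℝ 2 F (Set.Icc a b))
    (hderiv : ∀ x ∈ Set.Icc a b, c ≤ deriv F x) :
    ∃ C1 > 0, ∀ z1 z2 z3 z4 : ℝ,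
      a ≤ z1 → z1 < z2 → z2 < z3 → z3 < z4 → z4 ≤ b →
      |Distortion z1 z2 z3 z4 F - 1| ≤ C1 * (z4 - z1) := by
  obtain ⟨M, K, hM, hK⟩ := hF.exists_bound_lipschitzOnWith_deriv
  refine ⟨2 * M * K / c ^ 2 + 1, by positivity, fun z1 z2 z3 z4 h1 h12 h23 h34 h4 => ?_⟩
  have hsub : Ioo z1 z4 ⊆ Ioo a b := Ioo_subset_Ioo h1 h4
  obtain ⟨p, hp, q, hq, r, hr, s, hs, hD⟩ := exists_distortion_eq_deriv_mul_div h12 h23 h34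
    (hF.continuousOn.mono (Icc_subset_Icc h1 h4))
    ((hF.differentiableOn (by norm_num)).mono (hsub.trans Ioo_subset_Icc_self))
  have hlow : ∀ x ∈ Ioo z1 z4, c ≤ deriv F x := fun x hx =>
    hderiv x (Ioo_subset_Icc_self (hsub hx))
  have hclose : ∀ x ∈ Ioo z1 z4, ∀ y ∈ Ioo z1 z4, |deriv F x - deriv F y| ≤ K * (z4 - z1) :=
    fun x hx y hy => by
      simpa only [Real.dist_eq] using (hK.dist_le_mul x (hsub hx) y (hsub hy)).trans <| by
        gcongr
        exact Real.dist_le_of_mem_Icc (Ioo_subset_Icc_self hx) (Ioo_subset_Icc_self hy)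
  rw [hD]
  calc _ ≤ 2 * M * (K * (z4 - z1)) / c ^ 2 :=
        abs_mul_div_mul_sub_one_le_s11 hc (hlow r hr) (hlow s hs) (hM p (hsub hp)) (hM s (hsub hs))
          (hclose p hp r hr) (hclose q hq s hs)
    _ = 2 * M * K / c ^ 2 * (z4 - z1) := by ring
    _ ≤ (2 * M * K / c ^ 2 + 1) * (z4 - z1) := by gcongr <;> linarith

/-- C² version of Lemma 2.8: for a C² map with derivative bounded below by
`c > 0`, the cross-ratio distortion of any quadruple in the interval is
`1 + O(z4 - z1)`. -/
theorem distortion_C2_estimate (a b : ℝ) (hab : a < b) (F : ℝ → ℝ) (c : ℝ)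
    (hc : 0 < c) (hF : ContDiffOn ℝ 2 F (Set.Icc a b))
    (hderiv : ∀ x ∈ Set.Icc a b, c ≤ deriv F x) :
    ∃ C1 > 0, ∀ z1 z2 z3 z4 : ℝ,
      a ≤ z1 → z1 < z2 → z2 < z3 → z3 < z4 → z4 ≤ b →
      |Distortion z1 z2 z3 z4 F - 1| ≤ C1 * (z4 - z1) :=
  distortion_C2_estimate_general a b F c hc hF hderiv
end
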